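/- arXiv:2105.13446 — 8 statements merged into one kernel-verified Lean document; each statement's English description precedes it below -/
import Mathlib

section
/- For any finite simple graph G on N ≥ 2 vertices with positive average degree, the full discrepancy is bounded by the single-set discrepancy: ∂ ≤ (11/2) ∂₁. -/
open Finset

noncomputable section

/-- Degree of vertex `i`. -/
def deg (N : ℕ) (a : Fin N → Fin N → ℝ) (i : Fin N) : ℝ := ∑ j, a i j

/-- Average degree. -/
def avgDeg (N : ℕ) (a : Fin N → Fin N → ℝ) : ℝ := (∑ i, deg N a i) / N

/-- Number of edges between `A` and `B` (ordered pairs). -/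
def eCount (N : ℕ) (a : Fin N → Fin N → ℝ) (A B : Finset (Fin N)) : ℝ :=
  ∑ i ∈ A, ∑ j ∈ B, a i j

/-- Volume of a set of vertices. -/
def vol (N : ℕ) (a : Fin N → Fin N → ℝ) (A : Finset (Fin N)) : ℝ :=
  ∑ i ∈ A, deg N a i

/-- Discrepancy `δ(A,B)`. -/
def disc (N : ℕ) (a : Fin N → Fin N → ℝ) (A B : Finset (Fin N)) : ℝ :=
  eCount N a A B / (N * avgDeg N a) - ((A.card : ℝ) / N) * ((B.card : ℝ) / N)

/-- `∂ = max_{A,B} |δ(A,B)|`. -/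
def maxDisc (N : ℕ) (a : Fin N → Fin N → ℝ) : ℝ :=
  Finset.univ.sup' Finset.univ_nonempty
    (fun p : Finset (Fin N) × Finset (Fin N) => |disc N a p.1 p.2|)

/-- `∂₁ = max_{A} |δ(A,A)|`. -/
def maxDisc1 (N : ℕ) (a : Fin N → Fin N → ℝ) : ℝ :=
  Finset.univ.sup' Finset.univ_nonempty (fun A : Finset (Fin N) => |disc N a A A|)

/-- `∂₂ = max over disjoint `A,B` of `|δ(A,B)|`. -/
def maxDisc2 (N : ℕ) (a : Fin N → Fin N → ℝ) : ℝ :=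
  ((Finset.univ : Finset (Finset (Fin N) × Finset (Fin N))).filter
      (fun p => Disjoint p.1 p.2)).sup'
    ⟨(∅, ∅), by simp⟩ (fun p => |disc N a p.1 p.2|)

/-- `∂* = max_{A} |δ(A,[N])|`. -/
def maxDiscStar (N : ℕ) (a : Fin N → Fin N → ℝ) : ℝ :=
  Finset.univ.sup' Finset.univ_nonempty
    (fun A : Finset (Fin N) => |disc N a A Finset.univ|)

/-- Volume-biased discrepancy `δ̃(A,B)`. -/
def discVol (N : ℕ) (a : Fin N → Fin N → ℝ) (A B : Finset (Fin N)) : ℝ :=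
  eCount N a A B / vol N a Finset.univ -
    (vol N a A / vol N a Finset.univ) * (vol N a B / vol N a Finset.univ)

/-- `∂̃ = max_{A,B} |δ̃(A,B)|`. -/
def maxDiscVol (N : ℕ) (a : Fin N → Fin N → ℝ) : ℝ :=
  Finset.univ.sup' Finset.univ_nonempty
    (fun p : Finset (Fin N) × Finset (Fin N) => |discVol N a p.1 p.2|)

/-- Discrepancy on the induced subgraph `H`, `δ̃_H(A,B)`. -/
def discVolH (N : ℕ) (a : Fin N → Fin N → ℝ) (H A B : Finset (Fin N)) : ℝ :=
  eCount N a (A ∩ H) (B ∩ H) / vol N a H -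
    (vol N a (A ∩ H) / vol N a H) * (vol N a (B ∩ H) / vol N a H)

/-- `∂̃_H = max_{A,B} |δ̃_H(A,B)|`. -/
def maxDiscVolH (N : ℕ) (a : Fin N → Fin N → ℝ) (H : Finset (Fin N)) : ℝ :=
  Finset.univ.sup' Finset.univ_nonempty
    (fun p : Finset (Fin N) × Finset (Fin N) => |discVolH N a H p.1 p.2|)


lemma eCount_symm (N : ℕ) (a : Fin N → Fin N → ℝ) (hsymm : ∀ i j, a i j = a j i)
    (A B : Finset (Fin N)) : eCount N a A B = eCount N a B A := by
  rw [eCount, eCount, Finset.sum_comm]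
  exact Finset.sum_congr rfl fun j _ => Finset.sum_congr rfl fun i _ => hsymm i j

lemma eCount_key (N : ℕ) (a : Fin N → Fin N → ℝ) (A B : Finset (Fin N)) :
    eCount N a A B + eCount N a B A =
      eCount N a (A ∪ B) (A ∪ B) + eCount N a (A ∩ B) (A ∩ B)
        - eCount N a (A \ B) (A \ B) - eCount N a (B \ A) (B \ A) := by
  have h : ∀ S T : Finset (Fin N),
      eCount N a S T =
        ∑ i, ∑ j, (if i ∈ S then (1:ℝ) else 0) * (if j ∈ T then (1:ℝ) else 0) * a i j := by
    intro S T
    have hpull : ∀ i : Fin N, (∑ j ∈ T, if i ∈ S then a i j else 0)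
        = if i ∈ S then ∑ j ∈ T, a i j else 0 := by
      intro i; split <;> simp
    simp only [ite_mul, one_mul, zero_mul, mul_ite, mul_zero, Finset.sum_ite_mem,
      Finset.univ_inter, hpull, eCount]
  simp only [h, ← Finset.sum_add_distrib, ← Finset.sum_sub_distrib]
  refine Finset.sum_congr rfl fun i _ => Finset.sum_congr rfl fun j _ => ?_
  by_cases hiA : i ∈ A <;> by_cases hiB : i ∈ B <;> by_cases hjA : j ∈ A <;>
    by_cases hjB : j ∈ B <;>
    simp [hiA, hiB, hjA, hjB, Finset.mem_union, Finset.mem_inter, Finset.mem_sdiff] <;> ring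

lemma eCount_one (N : ℕ) (S T : Finset (Fin N)) :
    eCount N (fun _ _ => (1:ℝ)) S T = (S.card : ℝ) * T.card := by
  simp [eCount, Finset.sum_const, nsmul_eq_mul, mul_comm]

lemma disc_key (N : ℕ) (a : Fin N → Fin N → ℝ) (hsymm : ∀ i j, a i j = a j i)
    (A B : Finset (Fin N)) :
    2 * disc N a A B =
      disc N a (A ∪ B) (A ∪ B) + disc N a (A ∩ B) (A ∩ B)
        - disc N a (A \ B) (A \ B) - disc N a (B \ A) (B \ A) := by
  have hE := eCount_key N a A B
  rw [eCount_symm N a hsymm B A] at hE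
  have hC := eCount_key N (fun _ _ => (1:ℝ)) A B
  simp only [eCount_one] at hC
  simp only [disc]
  linear_combination hE / ((N:ℝ) * avgDeg N a) - hC / ((N:ℝ) * (N:ℝ))

/-- The full discrepancy is bounded by the single-set discrepancy: `∂ ≤ (11/2) ∂₁`. -/
theorem stmt_1 (N : ℕ) (hN : 2 ≤ N) (a : Fin N → Fin N → ℝ)
    (hsymm : ∀ i j, a i j = a j i)
    (h01 : ∀ i j, a i j = 0 ∨ a i j = 1)
    (hdiag : ∀ i, a i i = 0)
    (hdbar : 0 < avgDeg N a) :
    maxDisc N a ≤ (11 / 2) * maxDisc1 N a := by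
  have hd1 : ∀ X : Finset (Fin N), |disc N a X X| ≤ maxDisc1 N a := fun X =>
    Finset.le_sup' (fun A : Finset (Fin N) => |disc N a A A|) (Finset.mem_univ X)
  have h1 : 0 ≤ maxDisc1 N a := le_trans (abs_nonneg _) (hd1 ∅)
  rw [maxDisc]
  apply Finset.sup'_le
  rintro ⟨A, B⟩ -
  simp only
  have hid := disc_key N a hsymm A B
  have hU := hd1 (A ∪ B)
  have hI := hd1 (A ∩ B)
  have hA := hd1 (A \ B)
  have hB := hd1 (B \ A)
  have habs : |2 * disc N a A B| ≤ 4 * maxDisc1 N a := by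
    rw [hid]
    calc |disc N a (A ∪ B) (A ∪ B) + disc N a (A ∩ B) (A ∩ B)
          - disc N a (A \ B) (A \ B) - disc N a (B \ A) (B \ A)|
        ≤ |disc N a (A ∪ B) (A ∪ B) + disc N a (A ∩ B) (A ∩ B)
          - disc N a (A \ B) (A \ B)| + |disc N a (B \ A) (B \ A)| := abs_sub _ _
      _ ≤ (|disc N a (A ∪ B) (A ∪ B) + disc N a (A ∩ B) (A ∩ B)|
          + |disc N a (A \ B) (A \ B)|) + |disc N a (B \ A) (B \ A)| := by
          gcongr; exact abs_sub _ _
      _ ≤ ((|disc N a (A ∪ B) (A ∪ B)| + |disc N a (A ∩ B) (A ∩ B)|)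
          + |disc N a (A \ B) (A \ B)|) + |disc N a (B \ A) (B \ A)| := by
          gcongr; exact abs_add_le _ _
      _ ≤ 4 * maxDisc1 N a := by linarith
  rw [abs_mul, abs_two] at habs
  linarith [abs_nonneg (disc N a A B)]
end
end

section
/- For any finite simple graph G on N ≥ 2 vertices with positive average degree, with V₊ = {i ∈ [N] : d(i) ≥ d̄} and V₋ = {i ∈ [N] : d(i) < d̄}, one has ∂* = δ(V₊,[N]) = −δ(V₋,[N]) = (1/(2 N d̄)) Σ_{i=1}^N |d(i) − d̄|. -/
open Finset

noncomputable section

/-- With `V₊ = {i : d(i) ≥ d̄}` and `V₋ = {i : d(i) < d̄}`: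
`∂* = δ(V₊,[N]) = -δ(V₋,[N]) = (1/(2 N d̄)) Σ_i |d(i) - d̄|`. -/
theorem stmt_4 (N : ℕ) (hN : 2 ≤ N) (a : Fin N → Fin N → ℝ)
    (hsymm : ∀ i j, a i j = a j i)
    (h01 : ∀ i j, a i j = 0 ∨ a i j = 1)
    (hdiag : ∀ i, a i i = 0)
    (hdbar : 0 < avgDeg N a) :
    maxDiscStar N a =
        disc N a (Finset.univ.filter fun i => avgDeg N a ≤ deg N a i) Finset.univ ∧
      maxDiscStar N a =
        -disc N a (Finset.univ.filter fun i => deg N a i < avgDeg N a) Finset.univ ∧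
      maxDiscStar N a =
        (∑ i, |deg N a i - avgDeg N a|) / (2 * N * avgDeg N a) := by

  classical
  have hN0 : (0:ℝ) < N := by
    have : (0:ℕ) < N := by omega
    exact_mod_cast this
  have hc : (0:ℝ) < (N:ℝ) * avgDeg N a := mul_pos hN0 hdbar
  set f : Finset (Fin N) → ℝ := fun A => ∑ i ∈ A, (deg N a i - avgDeg N a) with hf
  have hsum : ∑ i, deg N a i = (N:ℝ) * avgDeg N a := by
    unfold avgDeg; field_simp
  have hfuniv : f Finset.univ = 0 := by
    simp only [hf, Finset.sum_sub_distrib, hsum, Finset.sum_const, Finset.card_univ,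
      Fintype.card_fin, nsmul_eq_mul]
    ring
  have hdisc : ∀ A : Finset (Fin N), disc N a A Finset.univ = f A / ((N:ℝ) * avgDeg N a) := by
    intro A
    unfold disc eCount
    have hvol : ∑ i ∈ A, ∑ j, a i j = ∑ i ∈ A, deg N a i := rfl
    rw [hvol]
    simp only [hf, Finset.sum_sub_distrib, Finset.sum_const, nsmul_eq_mul, Finset.card_univ,
      Fintype.card_fin]
    field_simp
  set Vp := Finset.univ.filter fun i => avgDeg N a ≤ deg N a i with hVp
  set Vm := Finset.univ.filter fun i => deg N a i < avgDeg N a with hVm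
  have hsplit : f Vp + f Vm = 0 := by
    have := Finset.sum_filter_add_sum_filter_not (Finset.univ : Finset (Fin N))
      (fun i => avgDeg N a ≤ deg N a i) (fun i => deg N a i - avgDeg N a)
    rw [hfuniv.symm]
    simp only [hf, hVp, hVm]
    rw [← this]
    congr 1
    apply Finset.sum_congr _ (fun _ _ => rfl)
    ext i; simp [not_le]
  have hP0 : 0 ≤ f Vp := by
    apply Finset.sum_nonneg
    intro i hi
    simp [hVp] at hi
    linarith
  have hle : ∀ A : Finset (Fin N), f A ≤ f Vp := by
    intro A
    have h1 : f A ≤ f (A.filter fun i => avgDeg N a ≤ deg N a i) := by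
      have := Finset.sum_filter_add_sum_filter_not A
        (fun i => avgDeg N a ≤ deg N a i) (fun i => deg N a i - avgDeg N a)
      have h2 : f (A.filter fun i => ¬ avgDeg N a ≤ deg N a i) ≤ 0 := by
        apply Finset.sum_nonpos
        intro i hi
        simp at hi
        linarith [hi.2]
      simp only [hf] at this ⊢
      linarith [this]
    refine h1.trans ?_
    apply Finset.sum_le_sum_of_subset_of_nonneg
    · intro i hi; simp [hVp]; exact (Finset.mem_filter.mp hi).2
    · intro i hi _
      simp [hVp] at hi
      linarith
  have habs : ∀ A : Finset (Fin N), |f A| ≤ f Vp := by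
    intro A
    rw [abs_le]
    constructor
    · have hcompl : f A + f Aᶜ = 0 := by
        rw [← hfuniv, hf]
        exact Finset.sum_add_sum_compl A _
      have := hle Aᶜ
      linarith
    · exact hle A
  have hmax : maxDiscStar N a = f Vp / ((N:ℝ) * avgDeg N a) := by
    apply le_antisymm
    · apply Finset.sup'_le
      intro A _
      rw [hdisc A, abs_div, abs_of_pos hc]
      gcongr
      exact habs A
    · have := Finset.le_sup' (fun A : Finset (Fin N) => |disc N a A Finset.univ|)
        (Finset.mem_univ Vp)
      rw [hdisc Vp, abs_div, abs_of_pos hc, abs_of_nonneg hP0] at this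
      exact this
  refine ⟨?_, ?_, ?_⟩
  · rw [hmax, hdisc]
  · rw [hmax, hdisc]
    have : f Vm = -f Vp := by linarith
    rw [this]
    ring
  · rw [hmax]
    have hsumabs : ∑ i, |deg N a i - avgDeg N a| = 2 * f Vp := by
      have := Finset.sum_filter_add_sum_filter_not (Finset.univ : Finset (Fin N))
        (fun i => avgDeg N a ≤ deg N a i) (fun i => |deg N a i - avgDeg N a|)
      rw [← this]
      have e1 : ∑ i ∈ Finset.univ.filter (fun i => avgDeg N a ≤ deg N a i),
          |deg N a i - avgDeg N a| = f Vp := by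
        apply Finset.sum_congr rfl
        intro i hi
        simp at hi
        rw [abs_of_nonneg (by linarith)]
      have e2 : ∑ i ∈ Finset.univ.filter (fun i => ¬ avgDeg N a ≤ deg N a i),
          |deg N a i - avgDeg N a| = f Vp := by
        have hm : f Vm = -f Vp := by linarith
        have e3 : ∑ i ∈ Finset.univ.filter (fun i => ¬ avgDeg N a ≤ deg N a i),
            |deg N a i - avgDeg N a| = -f Vm := by
          rw [hVm, hf]
          rw [← Finset.sum_neg_distrib]
          apply Finset.sum_congr
          · ext i; simp [not_le]
          · intro i hi
            simp [not_le] at hi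
            rw [abs_of_neg (by linarith)]
        rw [e3, hm, neg_neg]
      rw [e1, e2]; ring
    rw [hsumabs]
    field_simp
end
end

section
/- For any finite simple graph G on N ≥ 2 vertices with positive average degree and all subsets A, B of the vertex set, the plain and volume-biased discrepancies differ by at most twice the degree discrepancy: |δ(A,B) − δ̃(A,B)| ≤ 2 ∂*. -/
open Finset

noncomputable section

/-- For all `A, B`, `|δ(A,B) - δ̃(A,B)| ≤ 2 ∂*`. -/
theorem stmt_5 (N : ℕ) (hN : 2 ≤ N) (a : Fin N → Fin N → ℝ)
    (hsymm : ∀ i j, a i j = a j i)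
    (h01 : ∀ i j, a i j = 0 ∨ a i j = 1)
    (hdiag : ∀ i, a i i = 0)
    (hdbar : 0 < avgDeg N a)
    (A B : Finset (Fin N)) :
    |disc N a A B - discVol N a A B| ≤ 2 * maxDiscStar N a := by

  have hNpos : (0:ℝ) < N := by exact_mod_cast lt_of_lt_of_le (by norm_num) hN
  have hN0 : (N:ℝ) ≠ 0 := ne_of_gt hNpos
  have hD : (N:ℝ) * avgDeg N a = vol N a Finset.univ := by
    simp only [avgDeg, vol]
    field_simp
  have hDpos : 0 < (N:ℝ) * avgDeg N a := mul_pos hNpos hdbar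
  set D := (N:ℝ) * avgDeg N a with hDdef
  have hnn : ∀ i j, 0 ≤ a i j := fun i j => by rcases h01 i j with h | h <;> simp [h]
  have hdegnn : ∀ i, 0 ≤ deg N a i := fun i => Finset.sum_nonneg fun j _ => hnn i j
  have hvolnn : ∀ S : Finset (Fin N), 0 ≤ vol N a S :=
    fun S => Finset.sum_nonneg fun i _ => hdegnn i
  have hvolle : ∀ S : Finset (Fin N), vol N a S ≤ D := by
    intro S
    rw [hD]
    exact Finset.sum_le_sum_of_subset_of_nonneg (Finset.subset_univ S)
      (fun i _ _ => hdegnn i)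
  have hecount : ∀ S : Finset (Fin N), eCount N a S Finset.univ = vol N a S := fun S => rfl
  have hstar : ∀ S : Finset (Fin N),
      |vol N a S / D - (S.card : ℝ) / N| ≤ maxDiscStar N a := by
    intro S
    have hle := Finset.le_sup' (fun A : Finset (Fin N) => |disc N a A Finset.univ|)
      (Finset.mem_univ S)
    have h2 : disc N a S Finset.univ = vol N a S / D - (S.card : ℝ) / N := by
      simp only [disc, hecount, Finset.card_univ, Fintype.card_fin, ← hDdef]
      field_simp
    rw [maxDiscStar]
    rw [h2] at hle
    exact hle
  have habs1 : ∀ S : Finset (Fin N), |vol N a S / D| ≤ 1 := by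
    intro S
    rw [abs_of_nonneg (div_nonneg (hvolnn S) hDpos.le)]
    exact div_le_one_of_le₀ (hvolle S) hDpos.le
  have habs2 : ∀ S : Finset (Fin N), |(S.card : ℝ) / N| ≤ 1 := by
    intro S
    rw [abs_of_nonneg (div_nonneg (Nat.cast_nonneg _) hNpos.le)]
    apply div_le_one_of_le₀ _ hNpos.le
    exact_mod_cast Finset.card_le_card (Finset.subset_univ S) |>.trans
      (le_of_eq (by simp))
  set x := vol N a A / D
  set y := vol N a B / D
  set p := (A.card : ℝ) / N
  set q := (B.card : ℝ) / N
  have key : disc N a A B - discVol N a A B = x * y - p * q := by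
    simp only [disc, discVol, ← hD, ← hDdef]
    ring
  rw [key]
  have hsplit : x * y - p * q = x * (y - q) + q * (x - p) := by ring
  rw [hsplit]
  calc |x * (y - q) + q * (x - p)| ≤ |x * (y - q)| + |q * (x - p)| := abs_add_le _ _
    _ = |x| * |y - q| + |q| * |x - p| := by rw [abs_mul, abs_mul]
    _ ≤ 1 * maxDiscStar N a + 1 * maxDiscStar N a := by
        have hms : 0 ≤ maxDiscStar N a := le_trans (abs_nonneg _) (hstar A)
        exact add_le_add
          (mul_le_mul (habs1 A) (hstar B) (abs_nonneg _) zero_le_one)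
          (mul_le_mul (habs2 B) (hstar A) (abs_nonneg _) zero_le_one)
    _ = 2 * maxDiscStar N a := by ring
end
end

section
/- For any finite simple graph G on N ≥ 2 vertices with positive average degree, the maximal plain and volume-biased discrepancies satisfy |∂ − ∂̃| ≤ 2 ∂*. -/
open Finset

noncomputable section

/-- `|∂ - ∂̃| ≤ 2 ∂*`. -/
theorem stmt_6 (N : ℕ) (hN : 2 ≤ N) (a : Fin N → Fin N → ℝ)
    (hsymm : ∀ i j, a i j = a j i)
    (h01 : ∀ i j, a i j = 0 ∨ a i j = 1)
    (hdiag : ∀ i, a i i = 0)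
    (hdbar : 0 < avgDeg N a) :
    |maxDisc N a - maxDiscVol N a| ≤ 2 * maxDiscStar N a := by
  have hNpos : (0:ℝ) < N := by
    have : 0 < N := lt_of_lt_of_le (by norm_num) hN
    exact_mod_cast this
  set V := vol N a Finset.univ with hV
  have hVeq : V = N * avgDeg N a := by
    simp only [hV, vol, avgDeg]
    field_simp
  have hVpos : 0 < V := by rw [hVeq]; exact mul_pos hNpos hdbar
  have ha : ∀ i j, 0 ≤ a i j := by
    intro i j; rcases h01 i j with h | h <;> rw [h] <;> norm_num
  have hdeg : ∀ i, 0 ≤ deg N a i := fun i => Finset.sum_nonneg (fun j _ => ha i j)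
  have hvol_nonneg : ∀ A : Finset (Fin N), 0 ≤ vol N a A :=
    fun A => Finset.sum_nonneg (fun i _ => hdeg i)
  have hvol_le : ∀ A : Finset (Fin N), vol N a A ≤ V := fun A =>
    Finset.sum_le_sum_of_subset_of_nonneg (Finset.subset_univ A) (fun i _ _ => hdeg i)
  have heA : ∀ A : Finset (Fin N), eCount N a A Finset.univ = vol N a A := fun A => rfl
  have hstar : ∀ A : Finset (Fin N),
      |vol N a A / V - (A.card : ℝ) / N| ≤ maxDiscStar N a := by
    intro A
    have hle := Finset.le_sup' (fun A : Finset (Fin N) => |disc N a A Finset.univ|)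
      (Finset.mem_univ A)
    have hd : disc N a A Finset.univ = vol N a A / V - (A.card : ℝ) / N := by
      simp only [disc, heA A, ← hVeq, Finset.card_univ, Fintype.card_fin]
      rw [div_self (ne_of_gt hNpos), mul_one]
    rw [hd] at hle
    exact hle
  have key : ∀ A B : Finset (Fin N),
      |disc N a A B - discVol N a A B| ≤ 2 * maxDiscStar N a := by
    intro A B
    have hdiff : disc N a A B - discVol N a A B =
        (vol N a A / V) * (vol N a B / V) - ((A.card : ℝ) / N) * ((B.card : ℝ) / N) := by
      simp only [disc, discVol, ← hVeq, hV]
      ring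
    have hx0 : 0 ≤ vol N a A / V := div_nonneg (hvol_nonneg A) hVpos.le
    have hx1 : vol N a A / V ≤ 1 := (div_le_one hVpos).mpr (hvol_le A)
    have hq0 : 0 ≤ (B.card : ℝ) / N := div_nonneg (Nat.cast_nonneg _) hNpos.le
    have hq1 : (B.card : ℝ) / N ≤ 1 := by
      rw [div_le_one hNpos]
      exact_mod_cast (Finset.card_le_univ B).trans_eq (by simp)
    have h1 := hstar A
    have h2 := hstar B
    set x := vol N a A / V
    set y := vol N a B / V
    set p := (A.card : ℝ) / N
    set q := (B.card : ℝ) / N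
    rw [hdiff]
    have heq : x * y - p * q = x * (y - q) + q * (x - p) := by ring
    calc |x * y - p * q| = |x * (y - q) + q * (x - p)| := by rw [heq]
      _ ≤ |x * (y - q)| + |q * (x - p)| := abs_add_le _ _
      _ = |x| * |y - q| + |q| * |x - p| := by rw [abs_mul, abs_mul]
      _ ≤ 1 * maxDiscStar N a + 1 * maxDiscStar N a := by
          have b1 : |x| * |y - q| ≤ 1 * maxDiscStar N a :=
            mul_le_mul (by rw [abs_of_nonneg hx0]; exact hx1) h2 (abs_nonneg _) zero_le_one
          have b2 : |q| * |x - p| ≤ 1 * maxDiscStar N a :=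
            mul_le_mul (by rw [abs_of_nonneg hq0]; exact hq1) h1 (abs_nonneg _) zero_le_one
          exact add_le_add b1 b2
      _ = 2 * maxDiscStar N a := by ring
  rw [abs_sub_le_iff]
  constructor
  · rw [sub_le_iff_le_add]
    apply Finset.sup'_le
    intro p _
    have h1 := key p.1 p.2
    have h2 := Finset.le_sup'
      (fun p : Finset (Fin N) × Finset (Fin N) => |discVol N a p.1 p.2|) (Finset.mem_univ p)
    have h3 := abs_sub_abs_le_abs_sub (disc N a p.1 p.2) (discVol N a p.1 p.2)
    dsimp [maxDiscVol]
    linarith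
  · rw [sub_le_iff_le_add]
    apply Finset.sup'_le
    intro p _
    have h1 := key p.1 p.2
    have h2 := Finset.le_sup'
      (fun p : Finset (Fin N) × Finset (Fin N) => |disc N a p.1 p.2|) (Finset.mem_univ p)
    have h3 := abs_sub_abs_le_abs_sub (discVol N a p.1 p.2) (disc N a p.1 p.2)
    rw [abs_sub_comm] at h3
    dsimp [maxDisc]
    linarith
end
end

section
/- Let G be a finite simple graph on N ≥ 2 vertices with positive average degree and let H ⊆ [N] with vol(H) > 0 and vol(Hᶜ)/vol([N]) ≤ 1/2. Then for all A, B ⊆ [N], |δ̃(A,B) − δ̃_H(A,B)| ≤ 10 · vol(Hᶜ)/vol([N]). -/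
open Finset

noncomputable section

set_option maxHeartbeats 1000000 in
/-- If `vol H > 0` and `vol Hᶜ / vol [N] ≤ 1/2`, then for all `A B`,
`|δ̃(A,B) - δ̃_H(A,B)| ≤ 10 vol(Hᶜ)/vol([N])`. -/
theorem stmt_7 (N : ℕ) (hN : 2 ≤ N) (a : Fin N → Fin N → ℝ)
    (hsymm : ∀ i j, a i j = a j i)
    (h01 : ∀ i j, a i j = 0 ∨ a i j = 1)
    (hdiag : ∀ i, a i i = 0)
    (hdbar : 0 < avgDeg N a)
    (H : Finset (Fin N)) (hH : 0 < vol N a H)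
    (hHc : vol N a Hᶜ / vol N a Finset.univ ≤ 1 / 2) :
    ∀ A B : Finset (Fin N),
      |discVol N a A B - discVolH N a H A B| ≤
        10 * (vol N a Hᶜ / vol N a Finset.univ) := by
  intro A B
  have ha0 : ∀ i j, 0 ≤ a i j := fun i j => by rcases h01 i j with h | h <;> rw [h] <;> norm_num
  have hdeg0 : ∀ i, 0 ≤ deg N a i := fun i => Finset.sum_nonneg (fun j _ => ha0 i j)
  have hvol0 : ∀ S : Finset (Fin N), 0 ≤ vol N a S :=
    fun S => Finset.sum_nonneg (fun i _ => hdeg0 i)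
  have hvolmono : ∀ S T : Finset (Fin N), S ⊆ T → vol N a S ≤ vol N a T :=
    fun S T hST => Finset.sum_le_sum_of_subset_of_nonneg hST (fun i _ _ => hdeg0 i)
  set V : ℝ := vol N a Finset.univ with hVdef
  set W : ℝ := vol N a H with hWdef
  set C : ℝ := vol N a Hᶜ with hCdef
  have hVW : V = W + C := by
    rw [hVdef, hWdef, hCdef]
    exact (Finset.sum_add_sum_compl H _).symm
  have hC0 : 0 ≤ C := hvol0 _
  have hV : 0 < V := by rw [hVW]; linarith [hH]
  -- eCount facts
  have he0 : ∀ S T : Finset (Fin N), 0 ≤ eCount N a S T :=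
    fun S T => Finset.sum_nonneg fun i _ => Finset.sum_nonneg fun j _ => ha0 i j
  have he_swap : ∀ S T : Finset (Fin N), eCount N a S T = eCount N a T S := by
    intro S T
    rw [eCount, eCount, Finset.sum_comm]
    exact Finset.sum_congr rfl fun j _ => Finset.sum_congr rfl fun i _ => hsymm i j
  have he_le_volA : ∀ S T : Finset (Fin N), eCount N a S T ≤ vol N a S := by
    intro S T
    refine Finset.sum_le_sum fun i _ => ?_
    exact Finset.sum_le_sum_of_subset_of_nonneg (Finset.subset_univ T) (fun j _ _ => ha0 i j)
  have he_le_volB : ∀ S T : Finset (Fin N), eCount N a S T ≤ vol N a T := by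
    intro S T; rw [he_swap]; exact he_le_volA T S
  -- splits
  have hsplit1 : eCount N a A B = eCount N a (A ∩ H) B + eCount N a (A \ H) B := by
    rw [eCount, eCount, eCount]
    exact (Finset.sum_inter_add_sum_sdiff A H _).symm
  have hsplit2 : eCount N a (A ∩ H) B
      = eCount N a (A ∩ H) (B ∩ H) + eCount N a (A ∩ H) (B \ H) := by
    rw [eCount, eCount, eCount, ← Finset.sum_add_distrib]
    exact Finset.sum_congr rfl fun i _ => (Finset.sum_inter_add_sum_sdiff B H _).symm
  have hvolA : vol N a A = vol N a (A ∩ H) + vol N a (A \ H) := by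
    rw [vol, vol, vol]; exact (Finset.sum_inter_add_sum_sdiff A H _).symm
  have hvolB : vol N a B = vol N a (B ∩ H) + vol N a (B \ H) := by
    rw [vol, vol, vol]; exact (Finset.sum_inter_add_sum_sdiff B H _).symm
  have hAdiff : vol N a (A \ H) ≤ C := hvolmono _ _ (by
    intro i hi; simp only [Finset.mem_sdiff] at hi; simp [hi.2])
  have hBdiff : vol N a (B \ H) ≤ C := hvolmono _ _ (by
    intro i hi; simp only [Finset.mem_sdiff] at hi; simp [hi.2])
  set e : ℝ := eCount N a A B with hedef
  set eH : ℝ := eCount N a (A ∩ H) (B ∩ H) with heHdef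
  set vA : ℝ := vol N a A with hvAdef
  set vB : ℝ := vol N a B with hvBdef
  set vAH : ℝ := vol N a (A ∩ H) with hvAHdef
  set vBH : ℝ := vol N a (B ∩ H) with hvBHdef
  have heH0 : 0 ≤ eH := he0 _ _
  have heHW : eH ≤ W := le_trans (he_le_volA _ _) (hvolmono _ _ Finset.inter_subset_right)
  have hediff0 : eH ≤ e := by
    have := he0 (A ∩ H) (B \ H)
    have := he0 (A \ H) B
    rw [hsplit1, hsplit2]; linarith
  have hediff : e - eH ≤ 2 * C := by
    have h1 : eCount N a (A ∩ H) (B \ H) ≤ C :=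
      le_trans (he_le_volB _ _) hBdiff
    have h2 : eCount N a (A \ H) B ≤ C := by
      refine le_trans (he_le_volA _ _) (le_trans ?_ hAdiff)
      exact le_of_eq rfl
    rw [hsplit1, hsplit2]; linarith
  have hvAH0 : 0 ≤ vAH := hvol0 _
  have hvBH0 : 0 ≤ vBH := hvol0 _
  have hvAHW : vAH ≤ W := hvolmono _ _ Finset.inter_subset_right
  have hvBHW : vBH ≤ W := hvolmono _ _ Finset.inter_subset_right
  have hvA0 : 0 ≤ vA := hvol0 _
  have hvB0 : 0 ≤ vB := hvol0 _
  have hvAV : vA ≤ V := hvolmono _ _ (Finset.subset_univ _)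
  have hvBV : vB ≤ V := hvolmono _ _ (Finset.subset_univ _)
  have hvAdH : vAH ≤ vA ∧ vA - vAH ≤ C :=
    ⟨by linarith [hvol0 (A \ H), hvolA], by linarith [hAdiff, hvolA]⟩
  have hvBdH : vBH ≤ vB ∧ vB - vBH ≤ C :=
    ⟨by linarith [hvol0 (B \ H), hvolB], by linarith [hBdiff, hvolB]⟩
  have hW : (0:ℝ) < W := hH
  -- generic difference bound for ratios
  have ratio_bound : ∀ u uH : ℝ, 0 ≤ uH → uH ≤ W → uH ≤ u → u - uH ≤ 2 * C →
      |u / V - uH / W| ≤ 3 * (C / V) := by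
    intro u uH huH0 huHW huHu hud
    have hWne : W ≠ 0 := hW.ne'
    have hWC : W + C ≠ 0 := by positivity
    have key : u / (W + C) - uH / W = (u - uH) / (W + C) - uH * C / ((W + C) * W) := by
      field_simp
      ring
    rw [← hVW] at key
    rw [key]
    have h1 : 0 ≤ (u - uH) / V := div_nonneg (by linarith) hV.le
    have h2 : (u - uH) / V ≤ 2 * (C / V) := by
      rw [← mul_div_assoc]
      gcongr
    have h3 : 0 ≤ uH * C / (V * W) := by positivity
    have h4 : uH * C / (V * W) ≤ C / V := by
      rw [div_le_div_iff₀ (by positivity) hV]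
      nlinarith [mul_nonneg (mul_nonneg (sub_nonneg.mpr huHW) hC0) hV.le]
    rw [abs_sub_le_iff]
    constructor <;> linarith
  have t1 : |e / V - eH / W| ≤ 3 * (C / V) :=
    ratio_bound e eH heH0 heHW hediff0 hediff
  have t2 : |vA / V - vAH / W| ≤ 3 * (C / V) :=
    ratio_bound vA vAH hvAH0 hvAHW hvAdH.1 (by linarith [hvAdH.2, hC0])
  have t3 : |vB / V - vBH / W| ≤ 3 * (C / V) :=
    ratio_bound vB vBH hvBH0 hvBHW hvBdH.1 (by linarith [hvBdH.2, hC0])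
  -- bounds for the products
  have hx1 : vA / V ≤ 1 := by rw [div_le_one hV]; exact hvAV
  have hy1 : vB / V ≤ 1 := by rw [div_le_one hV]; exact hvBV
  have hx'0 : 0 ≤ vAH / W := div_nonneg hvAH0 hW.le
  have hx'1 : vAH / W ≤ 1 := by rw [div_le_one hW]; exact hvAHW
  have hy0 : 0 ≤ vB / V := div_nonneg hvB0 hV.le
  have tprod : |vA / V * (vB / V) - vAH / W * (vBH / W)| ≤ 6 * (C / V) := by
    have key : vA / V * (vB / V) - vAH / W * (vBH / W)
        = (vA / V - vAH / W) * (vB / V) + (vAH / W) * (vB / V - vBH / W) := by ring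
    rw [key]
    calc |(vA / V - vAH / W) * (vB / V) + (vAH / W) * (vB / V - vBH / W)|
        ≤ |(vA / V - vAH / W) * (vB / V)| + |(vAH / W) * (vB / V - vBH / W)| :=
          abs_add_le _ _
      _ = |vA / V - vAH / W| * |vB / V| + |vAH / W| * |vB / V - vBH / W| := by
          rw [abs_mul, abs_mul]
      _ ≤ (3 * (C / V)) * 1 + 1 * (3 * (C / V)) := by
          gcongr
          · rw [abs_of_nonneg hy0]; exact hy1
          · rw [abs_of_nonneg hx'0]; exact hx'1
      _ = 6 * (C / V) := by ring
  have hCV0 : 0 ≤ C / V := div_nonneg hC0 hV.le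
  have final : |(e / V - vA / V * (vB / V)) - (eH / W - vAH / W * (vBH / W))|
      ≤ 10 * (C / V) := by
    have key : (e / V - vA / V * (vB / V)) - (eH / W - vAH / W * (vBH / W))
        = (e / V - eH / W) - (vA / V * (vB / V) - vAH / W * (vBH / W)) := by ring
    rw [key]
    calc |(e / V - eH / W) - (vA / V * (vB / V) - vAH / W * (vBH / W))|
        ≤ |e / V - eH / W| + |vA / V * (vB / V) - vAH / W * (vBH / W)| := abs_sub _ _
      _ ≤ 3 * (C / V) + 6 * (C / V) := by gcongr
      _ ≤ 10 * (C / V) := by linarith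
  rw [discVol, discVolH]
  exact final
end
end

section
/- Let G be a finite simple graph on N ≥ 2 vertices with positive average degree and let H ⊆ [N] with vol(H) > 0 and vol(Hᶜ)/vol([N]) ≤ 1/2. Then |∂̃ − ∂̃_H| ≤ 10 · vol(Hᶜ)/vol([N]). -/
open Finset

noncomputable section

section hlp
variable {N : ℕ} {a : Fin N → Fin N → ℝ}

lemma deg_nonneg' (ha : ∀ i j, 0 ≤ a i j) (i : Fin N) : 0 ≤ deg N a i :=
  Finset.sum_nonneg fun j _ => ha i j

lemma vol_nonneg' (ha : ∀ i j, 0 ≤ a i j) (A : Finset (Fin N)) : 0 ≤ vol N a A :=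
  Finset.sum_nonneg fun i _ => deg_nonneg' ha i

lemma vol_mono' (ha : ∀ i j, 0 ≤ a i j) {A B : Finset (Fin N)} (h : A ⊆ B) :
    vol N a A ≤ vol N a B :=
  Finset.sum_le_sum_of_subset_of_nonneg h fun i _ _ => deg_nonneg' ha i

lemma eCount_nonneg' (ha : ∀ i j, 0 ≤ a i j) (A B : Finset (Fin N)) : 0 ≤ eCount N a A B :=
  Finset.sum_nonneg fun i _ => Finset.sum_nonneg fun j _ => ha i j

lemma eCount_le_vol_left' (ha : ∀ i j, 0 ≤ a i j) (A B : Finset (Fin N)) :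
    eCount N a A B ≤ vol N a A :=
  Finset.sum_le_sum fun i _ =>
    Finset.sum_le_sum_of_subset_of_nonneg (Finset.subset_univ B) fun j _ _ => ha i j

lemma eCount_comm' (hs : ∀ i j, a i j = a j i) (A B : Finset (Fin N)) :
    eCount N a A B = eCount N a B A := by
  rw [eCount, eCount, Finset.sum_comm]
  exact Finset.sum_congr rfl fun j _ => Finset.sum_congr rfl fun i _ => hs i j

lemma eCount_le_vol_right' (ha : ∀ i j, 0 ≤ a i j) (hs : ∀ i j, a i j = a j i)
    (A B : Finset (Fin N)) : eCount N a A B ≤ vol N a B := by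
  rw [eCount_comm' hs]; exact eCount_le_vol_left' ha B A

lemma eCount_mono' (ha : ∀ i j, 0 ≤ a i j) {A A' B B' : Finset (Fin N)}
    (hA : A' ⊆ A) (hB : B' ⊆ B) : eCount N a A' B' ≤ eCount N a A B := by
  refine le_trans (Finset.sum_le_sum fun i _ =>
    Finset.sum_le_sum_of_subset_of_nonneg hB fun j _ _ => ha i j) ?_
  exact Finset.sum_le_sum_of_subset_of_nonneg hA fun i _ _ =>
    Finset.sum_nonneg fun j _ => ha i j

lemma inter_union_inter_compl (A H : Finset (Fin N)) : (A ∩ H) ∪ (A ∩ Hᶜ) = A := by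
  ext x; simp [Finset.mem_inter, Finset.mem_union, Finset.mem_compl]; tauto

lemma vol_split' (A H : Finset (Fin N)) :
    vol N a A = vol N a (A ∩ H) + vol N a (A ∩ Hᶜ) := by
  rw [vol, vol, vol, ← Finset.sum_union]
  · rw [inter_union_inter_compl]
  · exact Finset.disjoint_left.mpr (by intro x hx hx'; simp at hx hx'; tauto)

lemma eCount_split_left' (A B H : Finset (Fin N)) :
    eCount N a A B = eCount N a (A ∩ H) B + eCount N a (A ∩ Hᶜ) B := by
  rw [eCount, eCount, eCount, ← Finset.sum_union]
  · rw [inter_union_inter_compl]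
  · exact Finset.disjoint_left.mpr (by intro x hx hx'; simp at hx hx'; tauto)

lemma eCount_split_right' (A B H : Finset (Fin N)) :
    eCount N a A B = eCount N a A (B ∩ H) + eCount N a A (B ∩ Hᶜ) := by
  rw [eCount, eCount, eCount, ← Finset.sum_add_distrib]
  refine Finset.sum_congr rfl fun i _ => ?_
  rw [← Finset.sum_union]
  · rw [inter_union_inter_compl]
  · exact Finset.disjoint_left.mpr (by intro x hx hx'; simp at hx hx'; tauto)

end hlp

lemma key1 (V v E A B c : ℝ) (hV : 0 < V) (hv : 0 < v) (hcv : v + c = V)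
    (hc : 0 ≤ c) (hE0 : 0 ≤ E) (hEv : E ≤ v) (hA0 : 0 ≤ A) (hAv : A ≤ v)
    (hB0 : 0 ≤ B) (hBv : B ≤ v) :
    |(E/v - (A/v)*(B/v)) - (E/V - (A/V)*(B/V))| ≤ 2*(c/V) := by
  have hcV : c = V - v := by linarith
  subst hcV
  have heq : (E/v - (A/v)*(B/v)) - (E/V - (A/V)*(B/V))
      = (E*v*V*(V-v) - A*B*((V-v)*(V+v))) / (v^2*V^2) := by
    field_simp; ring
  have hvV : v ≤ V := by linarith
  rw [heq, abs_div, abs_of_pos (show (0:ℝ) < v^2*V^2 by positivity),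
    div_le_iff₀ (show (0:ℝ) < v^2*V^2 by positivity), abs_le]
  have hR : 2 * ((V - v) / V) * (v ^ 2 * V ^ 2) = 2 * (V - v) * v ^ 2 * V := by
    field_simp
  rw [hR]
  have hAB : A * B ≤ v ^ 2 := by nlinarith
  have hAB0 : 0 ≤ A * B := mul_nonneg hA0 hB0
  have hcc : (0:ℝ) ≤ (V - v) * (V + v) := mul_nonneg hc (by linarith)
  have t1 : A * B * ((V - v) * (V + v)) ≤ v ^ 2 * ((V - v) * (V + v)) :=
    mul_le_mul_of_nonneg_right hAB hcc
  have t2 : v ^ 2 * ((V - v) * (V + v)) ≤ v ^ 2 * ((V - v) * (2 * V)) := by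
    apply mul_le_mul_of_nonneg_left _ (by positivity)
    apply mul_le_mul_of_nonneg_left (by linarith) hc
  have t3 : 0 ≤ E * v * V * (V - v) := by positivity
  have t4 : E * v * V * (V - v) ≤ v * v * V * (V - v) := by
    apply mul_le_mul_of_nonneg_right _ hc
    apply mul_le_mul_of_nonneg_right _ hV.le
    exact mul_le_mul_of_nonneg_right hEv hv.le
  have t5 : 0 ≤ A * B * ((V - v) * (V + v)) := mul_nonneg hAB0 hcc
  constructor <;> nlinarith

lemma key2 (V E E' P P' c : ℝ) (hV : 0 < V) (hc : 0 ≤ c)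
    (h1 : E' ≤ E) (h2 : E ≤ E' + 2*c) (h3 : P' ≤ P) (h4 : P ≤ P' + 2*c*V) :
    |(E/V - P/V^2) - (E'/V - P'/V^2)| ≤ 2*(c/V) := by
  have heq : (E/V - P/V^2) - (E'/V - P'/V^2) = ((E-E')*V - (P-P'))/V^2 := by
    field_simp; ring
  rw [heq, abs_div, abs_of_pos (show (0:ℝ) < V^2 by positivity),
    div_le_iff₀ (show (0:ℝ) < V^2 by positivity), abs_le]
  have hR : 2 * (c / V) * V ^ 2 = 2 * c * V := by field_simp
  rw [hR]
  have u1 : 0 ≤ (E - E') * V := mul_nonneg (by linarith) hV.le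
  have u2 : (E - E') * V ≤ 2 * c * V := mul_le_mul_of_nonneg_right (by linarith) hV.le
  constructor <;> nlinarith

lemma sup'_abs_sub {α : Type*} (s : Finset α) (hs : s.Nonempty) (f g : α → ℝ) (K : ℝ)
    (h : ∀ x ∈ s, |f x - g x| ≤ K) :
    |s.sup' hs f - s.sup' hs g| ≤ K := by
  have h1 : s.sup' hs f ≤ s.sup' hs g + K := by
    rw [Finset.sup'_le_iff]
    intro x hx
    have h' := h x hx
    rw [abs_le] at h'
    have h'' := Finset.le_sup' g hx
    linarith [h'.2]
  have h2 : s.sup' hs g ≤ s.sup' hs f + K := by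
    rw [Finset.sup'_le_iff]
    intro x hx
    have h' := h x hx
    rw [abs_le] at h'
    have := Finset.le_sup' f hx
    linarith
  rw [abs_le]; constructor <;> linarith


/-- If `vol H > 0` and `vol Hᶜ / vol [N] ≤ 1/2`, then
`|∂̃ - ∂̃_H| ≤ 10 vol(Hᶜ)/vol([N])`. -/
theorem stmt_8 (N : ℕ) (hN : 2 ≤ N) (a : Fin N → Fin N → ℝ)
    (hsymm : ∀ i j, a i j = a j i)
    (h01 : ∀ i j, a i j = 0 ∨ a i j = 1)
    (hdiag : ∀ i, a i i = 0)
    (hdbar : 0 < avgDeg N a)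
    (H : Finset (Fin N)) (hH : 0 < vol N a H)
    (hHc : vol N a Hᶜ / vol N a Finset.univ ≤ 1 / 2) :
    |maxDiscVol N a - maxDiscVolH N a H| ≤
      10 * (vol N a Hᶜ / vol N a Finset.univ) := by
  have ha : ∀ i j, 0 ≤ a i j := fun i j => by
    rcases h01 i j with h | h <;> rw [h] <;> norm_num
  have hNpos : (0:ℝ) < N := by
    have : 0 < N := by omega
    exact_mod_cast this
  have hVpos : 0 < vol N a (Finset.univ : Finset (Fin N)) := by
    have hA : avgDeg N a = vol N a (Finset.univ : Finset (Fin N)) / N := rfl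
    rw [hA] at hdbar
    have h2 := mul_pos hdbar hNpos
    rwa [div_mul_cancel₀ _ hNpos.ne'] at h2
  set V := vol N a (Finset.univ : Finset (Fin N)) with hVdef
  set c := vol N a Hᶜ with hcdef
  set v := vol N a H with hvdef
  have hsum : v + c = V := Finset.sum_add_sum_compl H _
  have hc0 : 0 ≤ c := vol_nonneg' ha Hᶜ
  have hpoint : ∀ A B : Finset (Fin N),
      |(|discVol N a A B|) - (|discVolH N a H A B|)| ≤ 4 * (c / V) := by
    intro A B
    have step1 : |discVolH N a H A B - discVol N a (A ∩ H) (B ∩ H)| ≤ 2 * (c / V) := by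
      have hE0 : 0 ≤ eCount N a (A ∩ H) (B ∩ H) := eCount_nonneg' ha _ _
      have hEv : eCount N a (A ∩ H) (B ∩ H) ≤ v :=
        (eCount_le_vol_left' ha _ _).trans (vol_mono' ha Finset.inter_subset_right)
      have hA0 : 0 ≤ vol N a (A ∩ H) := vol_nonneg' ha _
      have hAv : vol N a (A ∩ H) ≤ v := vol_mono' ha Finset.inter_subset_right
      have hB0 : 0 ≤ vol N a (B ∩ H) := vol_nonneg' ha _
      have hBv : vol N a (B ∩ H) ≤ v := vol_mono' ha Finset.inter_subset_right
      exact key1 V v (eCount N a (A ∩ H) (B ∩ H)) (vol N a (A ∩ H)) (vol N a (B ∩ H)) c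
        hVpos hH hsum hc0 hE0 hEv hA0 hAv hB0 hBv
    have step2 : |discVol N a A B - discVol N a (A ∩ H) (B ∩ H)| ≤ 2 * (c / V) := by
      have e1 : discVol N a A B =
          eCount N a A B / V - (vol N a A * vol N a B) / V ^ 2 := by
        rw [discVol, div_mul_div_comm, sq]
      have e2 : discVol N a (A ∩ H) (B ∩ H) =
          eCount N a (A ∩ H) (B ∩ H) / V -
            (vol N a (A ∩ H) * vol N a (B ∩ H)) / V ^ 2 := by
        rw [discVol, div_mul_div_comm, sq]
      rw [e1, e2]
      apply key2 V _ _ _ _ c hVpos hc0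
      · exact eCount_mono' ha Finset.inter_subset_left Finset.inter_subset_left
      · have s1 := eCount_split_left' (a := a) A B H
        have s2 := eCount_split_right' (a := a) (A ∩ H) B H
        have b1 : eCount N a (A ∩ Hᶜ) B ≤ c :=
          (eCount_le_vol_left' ha _ _).trans (vol_mono' ha Finset.inter_subset_right)
        have b2 : eCount N a (A ∩ H) (B ∩ Hᶜ) ≤ c :=
          (eCount_le_vol_right' ha hsymm _ _).trans (vol_mono' ha Finset.inter_subset_right)
        linarith
      · exact mul_le_mul (vol_mono' ha Finset.inter_subset_left)
          (vol_mono' ha Finset.inter_subset_left) (vol_nonneg' ha _) (vol_nonneg' ha _)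
      · have vsA := vol_split' (a := a) A H
        have vsB := vol_split' (a := a) B H
        have hxa : vol N a (A ∩ Hᶜ) ≤ c := vol_mono' ha Finset.inter_subset_right
        have hxb : vol N a (B ∩ Hᶜ) ≤ c := vol_mono' ha Finset.inter_subset_right
        have hxa0 : 0 ≤ vol N a (A ∩ Hᶜ) := vol_nonneg' ha _
        have hxb0 : 0 ≤ vol N a (B ∩ Hᶜ) := vol_nonneg' ha _
        have hvB : vol N a B ≤ V := vol_mono' ha (Finset.subset_univ B)
        have hvB0 : 0 ≤ vol N a B := vol_nonneg' ha _
        have hvA' : vol N a (A ∩ H) ≤ V := vol_mono' ha (Finset.subset_univ _)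
        have hvA'0 : 0 ≤ vol N a (A ∩ H) := vol_nonneg' ha _
        have m1 : vol N a (A ∩ Hᶜ) * vol N a B ≤ c * V :=
          mul_le_mul hxa hvB hvB0 hc0
        have m2 : vol N a (A ∩ H) * vol N a (B ∩ Hᶜ) ≤ V * c :=
          mul_le_mul hvA' hxb hxb0 hVpos.le
        nlinarith [m1, m2]
    calc |(|discVol N a A B|) - (|discVolH N a H A B|)|
        ≤ |discVol N a A B - discVolH N a H A B| := abs_abs_sub_abs_le_abs_sub _ _
      _ ≤ |discVol N a A B - discVol N a (A ∩ H) (B ∩ H)| +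
          |discVol N a (A ∩ H) (B ∩ H) - discVolH N a H A B| := abs_sub_le _ _ _
      _ ≤ 2 * (c / V) + 2 * (c / V) := by
          rw [abs_sub_comm (discVol N a (A ∩ H) (B ∩ H))]
          exact add_le_add step2 step1
      _ = 4 * (c / V) := by ring
  have hmain : |maxDiscVol N a - maxDiscVolH N a H| ≤ 4 * (c / V) := by
    rw [maxDiscVol, maxDiscVolH]
    exact sup'_abs_sub _ _ _ _ _ (fun p _ => hpoint p.1 p.2)
  have hcv : 0 ≤ c / V := div_nonneg hc0 hVpos.le
  linarith
end
end

section
/- (Expander mixing lemma.) Let G be a finite simple graph on N ≥ 2 vertices in which every vertex has positive degree. Then for all subsets A, B of the vertex set, |e(A,B)/vol([N]) − (vol(A)/vol([N]))(vol(B)/vol([N]))| ≤ λ · √((vol(A)/vol([N])) · (vol(B)/vol([N]))). -/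
open Finset

noncomputable section

/-! With `D = diag(d)` and `B = D^{-1/2} A D^{-1/2}`, the unit vector
`u = D^{1/2} 1 / √vol([N])` satisfies `B u = u`, and for `x = D^{1/2} 1_A`, `y = D^{1/2} 1_B`
one has `⟪x, B y⟫ = e(A,B)`, `⟪x, u⟫ = vol(A) / √vol([N])` and `‖x‖² = vol(A)`. So the
discrepancy is `⟪x', B y⟫ / vol([N])`, where `x'` is the projection of `x` onto `uᗮ`. All
eigenvalues of `B` are at most `1`, since with `z = D^{-1/2} x` its quadratic form is
`Σ a_ij z_i z_j ≤ Σ a_ij (z_i² + z_j²) / 2 = ‖x‖²`; hence if the top eigenvalue exceeds `λ₂`,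
its eigenline is spanned by `u`. Either way `x'` only meets eigenvalues in `[-λ, λ]`, and
Cauchy–Schwarz in an eigenbasis gives `|⟪x', B y⟫| ≤ λ ‖x‖ ‖y‖`. -/

open scoped RealInnerProductSpace

namespace OrthonormalBasis

variable {ι E : Type*} [Fintype ι] [NormedAddCommGroup E] [InnerProductSpace ℝ E]
  {b : OrthonormalBasis ι ℝ E} {T : E →ₗ[ℝ] E} {μ : ι → ℝ}

theorem inner_map_right_eq_mul (hb : ∀ k, T (b k) = μ k • b k) (k : ι) (y : E) :
    ⟪b k, T y⟫ = μ k * ⟪b k, y⟫ := by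
  conv_lhs => rw [← b.sum_repr' y]
  simp_rw [map_sum, map_smul, hb, smul_smul]
  rw [b.orthonormal.inner_right_fintype, mul_comm]

theorem inner_map_eq_sum (hb : ∀ k, T (b k) = μ k • b k) (x y : E) :
    ⟪x, T y⟫ = ∑ k, μ k * ⟪b k, x⟫ * ⟪b k, y⟫ := by
  rw [← b.sum_inner_mul_inner]
  refine Finset.sum_congr rfl fun k _ => ?_
  rw [inner_map_right_eq_mul hb, real_inner_comm]
  ring

theorem inner_map_comm (hb : ∀ k, T (b k) = μ k • b k) (x y : E) : ⟪x, T y⟫ = ⟪y, T x⟫ := by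
  simp_rw [inner_map_eq_sum hb, mul_right_comm]

theorem abs_inner_map_le (hb : ∀ k, T (b k) = μ k • b k) {c : ℝ} (hc : 0 ≤ c) {x : E}
    (hx : ∀ k, ⟪b k, x⟫ ≠ 0 → |μ k| ≤ c) (y : E) : |⟪x, T y⟫| ≤ c * ‖x‖ * ‖y‖ := by
  have hterm (k : ι) : |μ k * ⟪b k, x⟫ * ⟪b k, y⟫| ≤ c * (|⟪b k, x⟫| * |⟪b k, y⟫|) := by
    by_cases hk : ⟪b k, x⟫ = 0
    · simp [hk]
    · rw [abs_mul, abs_mul, mul_assoc]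
      exact mul_le_mul_of_nonneg_right (hx k hk) (by positivity)
  have hnorm (z : E) : √(∑ k, |⟪b k, z⟫| ^ 2) = ‖z‖ := by
    simp_rw [sq_abs, b.sum_sq_inner_right, Real.sqrt_sq (norm_nonneg z)]
  calc |⟪x, T y⟫| ≤ ∑ k, c * (|⟪b k, x⟫| * |⟪b k, y⟫|) := by
        rw [inner_map_eq_sum hb]
        exact (Finset.abs_sum_le_sum_abs _ _).trans (Finset.sum_le_sum fun k _ => hterm k)
    _ ≤ c * (‖x‖ * ‖y‖) := by
        rw [← Finset.mul_sum, ← hnorm x, ← hnorm y]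
        exact mul_le_mul_of_nonneg_left (Real.sum_mul_le_sqrt_mul_sqrt _ _ _) hc
    _ = c * ‖x‖ * ‖y‖ := (mul_assoc _ _ _).symm

theorem inner_eq_zero_of_eigenvalue_ne (hb : ∀ k, T (b k) = μ k • b k) {u : E} {a : ℝ}
    (hu : T u = a • u) {k : ι} (hk : μ k ≠ a) : ⟪b k, u⟫ = 0 := by
  have h : μ k * ⟪b k, u⟫ = a * ⟪b k, u⟫ := by
    rw [← inner_map_right_eq_mul hb, hu, real_inner_smul_right]
  exact (mul_eq_mul_right_iff.mp h).resolve_left hk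

theorem abs_eigenvalue_le_of_inner_ne_zero (hb : ∀ k, T (b k) = μ k • b k) {u : E} (hu : u ≠ 0)
    (hTu : T u = u) (hμ : ∀ k, μ k ≤ 1) {k₀ : ι} {c : ℝ} (hgap : ∀ k ≠ k₀, μ k ≤ c)
    (hlow : ∀ k, -c ≤ μ k) {x : E} (hxu : ⟪u, x⟫ = 0) {k : ι} (hk : ⟪b k, x⟫ ≠ 0) :
    |μ k| ≤ c := by
  refine abs_le.2 ⟨hlow k, not_lt.1 fun hck => hk ?_⟩
  obtain rfl : k = k₀ := by
    by_contra h
    exact (hgap k h).not_gt hck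
  have hu_single : ∀ l ≠ k, ⟪b l, u⟫ = 0 := fun l hl =>
    inner_eq_zero_of_eigenvalue_ne hb (a := 1) (by rwa [one_smul])
      (by linarith [hgap l hl, hμ k])
  have hexpand (z : E) : ⟪u, z⟫ = ⟪b k, u⟫ * ⟪b k, z⟫ := by
    rw [← b.sum_inner_mul_inner, Finset.sum_eq_single k
      (fun l _ hl => by rw [real_inner_comm, hu_single l hl, zero_mul])
      (fun h => absurd (Finset.mem_univ k) h), real_inner_comm]
  have hku : ⟪b k, u⟫ ≠ 0 := fun h => hu <| by
    rw [← inner_self_eq_zero (𝕜 := ℝ), hexpand, h, zero_mul]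
  rw [hexpand, mul_eq_zero] at hxu
  exact hxu.resolve_left hku

theorem abs_inner_map_sub_le (hb : ∀ k, T (b k) = μ k • b k) {u : E} (hu : ‖u‖ = 1)
    (hTu : T u = u) (hμ : ∀ k, μ k ≤ 1) {k₀ : ι} {c : ℝ} (hc : 0 ≤ c)
    (hgap : ∀ k ≠ k₀, μ k ≤ c) (hlow : ∀ k, -c ≤ μ k) (x y : E) :
    |⟪x, T y⟫ - ⟪x, u⟫ * ⟪u, y⟫| ≤ c * ‖x‖ * ‖y‖ := by
  set x' := x - ⟪u, x⟫ • u
  have hx'u : ⟪u, x'⟫ = 0 := by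
    rw [inner_sub_right, real_inner_smul_right, real_inner_self_eq_norm_sq, hu]
    ring
  have hx' : ⟪x', T y⟫ = ⟪x, T y⟫ - ⟪x, u⟫ * ⟪u, y⟫ := by
    rw [inner_sub_left, real_inner_smul_left, inner_map_comm hb u, hTu, real_inner_comm u x,
      real_inner_comm y]
  have hx'_le : ‖x'‖ ≤ ‖x‖ := by
    have h := norm_add_sq_eq_norm_sq_add_norm_sq_real (x := x') (y := ⟪u, x⟫ • u)
      (by rw [real_inner_smul_right, real_inner_comm u x', hx'u, mul_zero])
    rw [sub_add_cancel] at h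
    exact le_of_sq_le_sq (by nlinarith [sq_nonneg ‖⟪u, x⟫ • u‖]) (norm_nonneg x)
  rw [← hx']
  calc |⟪x', T y⟫| ≤ c * ‖x'‖ * ‖y‖ :=
        abs_inner_map_le hb hc (fun k hk => abs_eigenvalue_le_of_inner_ne_zero hb
          (norm_ne_zero_iff.1 (by rw [hu]; exact one_ne_zero)) hTu hμ hgap hlow hx'u hk) y
    _ ≤ c * ‖x‖ * ‖y‖ := by gcongr

end OrthonormalBasis

def normAdj (N : ℕ) (a : Fin N → Fin N → ℝ) : Matrix (Fin N) (Fin N) ℝ :=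
  Matrix.of fun i j => a i j / (√(deg N a i) * √(deg N a j))

/-- `D^{1/2} 1_A`. -/
def sqrtDegVec (N : ℕ) (a : Fin N → Fin N → ℝ) (A : Finset (Fin N)) : EuclideanSpace ℝ (Fin N) :=
  WithLp.toLp 2 fun i => if i ∈ A then √(deg N a i) else 0

section Graph

variable {N : ℕ} {a : Fin N → Fin N → ℝ}

theorem inner_sqrtDegVec_left (A : Finset (Fin N)) (x : EuclideanSpace ℝ (Fin N)) :
    ⟪sqrtDegVec N a A, x⟫ = ∑ i ∈ A, √(deg N a i) * x i := by
  simp [sqrtDegVec, PiLp.inner_apply, Finset.sum_ite_mem, mul_comm]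

theorem inner_sqrtDegVec (hdeg : ∀ i, 0 < deg N a i) (A B : Finset (Fin N)) :
    ⟪sqrtDegVec N a A, sqrtDegVec N a B⟫ = vol N a (A ∩ B) := by
  rw [inner_sqrtDegVec_left, vol, ← Finset.sum_ite_mem]
  refine Finset.sum_congr rfl fun i _ => ?_
  simp only [sqrtDegVec, PiLp.toLp_apply]
  split_ifs <;> simp [Real.mul_self_sqrt (hdeg i).le]

theorem norm_sqrtDegVec (hdeg : ∀ i, 0 < deg N a i) (A : Finset (Fin N)) :
    ‖sqrtDegVec N a A‖ = √(vol N a A) := by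
  rw [norm_eq_sqrt_real_inner, inner_sqrtDegVec hdeg, Finset.inter_self]

theorem normAdj_sqrtDegVec_apply (hdeg : ∀ i, 0 < deg N a i) (B : Finset (Fin N)) (i : Fin N) :
    Matrix.toEuclideanLin (normAdj N a) (sqrtDegVec N a B) i =
      (∑ j ∈ B, a i j) / √(deg N a i) := by
  rw [Matrix.toLpLin_apply]
  simp only [PiLp.toLp_apply, Matrix.mulVec, dotProduct, normAdj, Matrix.of_apply, sqrtDegVec,
    Finset.sum_div]
  simp_rw [mul_ite, mul_zero]
  rw [Finset.sum_ite_mem, Finset.univ_inter]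
  refine Finset.sum_congr rfl fun j _ => ?_
  have := (Real.sqrt_pos.2 (hdeg j)).ne'
  field_simp

theorem inner_sqrtDegVec_normAdj (hdeg : ∀ i, 0 < deg N a i) (A B : Finset (Fin N)) :
    ⟪sqrtDegVec N a A, Matrix.toEuclideanLin (normAdj N a) (sqrtDegVec N a B)⟫ =
      eCount N a A B := by
  rw [inner_sqrtDegVec_left, eCount]
  refine Finset.sum_congr rfl fun i _ => ?_
  rw [normAdj_sqrtDegVec_apply hdeg, mul_div_cancel₀ _ (Real.sqrt_pos.2 (hdeg i)).ne']

theorem normAdj_sqrtDegVec_univ (hdeg : ∀ i, 0 < deg N a i) :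
    Matrix.toEuclideanLin (normAdj N a) (sqrtDegVec N a univ) = sqrtDegVec N a univ := by
  ext i
  rw [normAdj_sqrtDegVec_apply hdeg, ← deg, Real.div_sqrt]
  simp [sqrtDegVec]

theorem inner_normAdj_self_le (hsymm : ∀ i j, a i j = a j i) (hnonneg : ∀ i j, 0 ≤ a i j)
    (hdeg : ∀ i, 0 < deg N a i) (x : EuclideanSpace ℝ (Fin N)) :
    ⟪x, Matrix.toEuclideanLin (normAdj N a) x⟫ ≤ ‖x‖ ^ 2 := by
  set y : Fin N → ℝ := fun i => x i / √(deg N a i)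
  have hx (i : Fin N) : x i = √(deg N a i) * y i :=
    (mul_div_cancel₀ _ (Real.sqrt_pos.2 (hdeg i)).ne').symm
  have hform : ⟪x, Matrix.toEuclideanLin (normAdj N a) x⟫ = ∑ i, ∑ j, a i j * (y i * y j) := by
    simp only [PiLp.inner_apply, Matrix.toLpLin_apply, Matrix.mulVec, dotProduct,
      normAdj, Matrix.of_apply, RCLike.inner_apply, conj_trivial, Finset.sum_mul]
    refine Finset.sum_congr rfl fun i _ => Finset.sum_congr rfl fun j _ => ?_
    rw [hx i, hx j]
    have := (Real.sqrt_pos.2 (hdeg i)).ne'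
    have := (Real.sqrt_pos.2 (hdeg j)).ne'
    field_simp
  have hnorm : ‖x‖ ^ 2 = ∑ i, ∑ j, a i j * y i ^ 2 := by
    rw [EuclideanSpace.real_norm_sq_eq]
    refine Finset.sum_congr rfl fun i _ => ?_
    rw [hx i, mul_pow, Real.sq_sqrt (hdeg i).le, deg, Finset.sum_mul]
  have hswap : ∑ i, ∑ j, a i j * y i ^ 2 = ∑ i, ∑ j, a i j * y j ^ 2 := by
    rw [Finset.sum_comm]
    simp_rw [hsymm]
  calc ⟪x, Matrix.toEuclideanLin (normAdj N a) x⟫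
      ≤ ∑ i, ∑ j, (a i j * y i ^ 2 + a i j * y j ^ 2) / 2 := by
        rw [hform]
        gcongr with i _ j _
        nlinarith [hnonneg i j, mul_nonneg (hnonneg i j) (sq_nonneg (y i - y j))]
    _ = ‖x‖ ^ 2 := by
        simp_rw [← Finset.sum_div, Finset.sum_add_distrib, ← hswap, hnorm]
        ring

theorem abs_eCount_sub_le (hsymm : ∀ i j, a i j = a j i) (hnonneg : ∀ i j, 0 ≤ a i j)
    (hdeg : ∀ i, 0 < deg N a i) {b : OrthonormalBasis (Fin N) ℝ (EuclideanSpace ℝ (Fin N))}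
    {μ : Fin N → ℝ} (hb : ∀ k, Matrix.toEuclideanLin (normAdj N a) (b k) = μ k • b k)
    {k₀ : Fin N} {c : ℝ} (hc : 0 ≤ c) (hgap : ∀ k ≠ k₀, μ k ≤ c) (hlow : ∀ k, -c ≤ μ k)
    (A B : Finset (Fin N)) :
    |eCount N a A B - vol N a A * vol N a B / vol N a univ| ≤
      c * √(vol N a A) * √(vol N a B) := by
  have hμ1 (k : Fin N) : μ k ≤ 1 := by
    simpa [OrthonormalBasis.inner_map_right_eq_mul hb, b.norm_eq_one] using
      inner_normAdj_self_le hsymm hnonneg hdeg (b k)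
  have hW : 0 < vol N a univ := sum_pos (fun i _ => hdeg i) ⟨k₀, mem_univ _⟩
  set u := (√(vol N a univ))⁻¹ • sqrtDegVec N a univ
  have hu : ‖u‖ = 1 := by
    rw [norm_smul, norm_sqrtDegVec hdeg, norm_inv, Real.norm_of_nonneg (Real.sqrt_nonneg _),
      inv_mul_cancel₀ (Real.sqrt_pos.2 hW).ne']
  have hTu : Matrix.toEuclideanLin (normAdj N a) u = u := by
    rw [map_smul, normAdj_sqrtDegVec_univ hdeg]
  have key := OrthonormalBasis.abs_inner_map_sub_le hb hu hTu hμ1 hc hgap hlow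
    (sqrtDegVec N a A) (sqrtDegVec N a B)
  rw [inner_sqrtDegVec_normAdj hdeg, inner_smul_right, real_inner_smul_left,
    inner_sqrtDegVec hdeg, inner_sqrtDegVec hdeg, inter_univ, univ_inter, norm_sqrtDegVec hdeg,
    norm_sqrtDegVec hdeg] at key
  convert key using 3
  field_simp
  rw [Real.sq_sqrt hW.le]

end Graph

theorem abs_div_sub_div_mul_div_le {e p q W c : ℝ} (hW : 0 < W) (hp : 0 ≤ p) (hq : 0 ≤ q)
    (h : |e - p * q / W| ≤ c * √p * √q) :
    |e / W - p / W * (q / W)| ≤ c * √(p / W * (q / W)) := by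
  have hlhs : e / W - p / W * (q / W) = (e - p * q / W) / W := by field_simp
  have hrhs : √(p / W * (q / W)) = √p * √q / W := by
    rw [div_mul_div_comm, Real.sqrt_div (mul_nonneg hp hq), Real.sqrt_mul hp,
      Real.sqrt_mul_self hW.le]
  rw [hlhs, hrhs, abs_div, abs_of_pos hW, ← mul_div_assoc, ← mul_assoc]
  exact div_le_div_of_nonneg_right h hW.le

theorem Matrix.IsHermitian.toEuclideanLin_eigenvectorBasis {𝕜 n : Type*} [RCLike 𝕜] [Fintype n]
    [DecidableEq n] {A : Matrix n n 𝕜} (hA : A.IsHermitian) (k : n) :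
    Matrix.toEuclideanLin A (hA.eigenvectorBasis k) = hA.eigenvalues k • hA.eigenvectorBasis k :=
  congrArg (WithLp.toLp 2) (hA.mulVec_eigenvectorBasis k)

section Ordering

variable {N : ℕ} {ev μ : Fin N → ℝ} {σ : Equiv.Perm (Fin N)}

theorem le_of_antitone_perm_of_ne_first (hN : 1 < N) (hev : ev = μ ∘ σ) (hmono : Antitone ev)
    {k : Fin N} (hk : k ≠ σ ⟨0, Nat.zero_lt_of_lt hN⟩) : μ k ≤ ev ⟨1, hN⟩ := by
  have hk' : σ.symm k ≠ ⟨0, Nat.zero_lt_of_lt hN⟩ := fun h => hk (by rw [← h, σ.apply_symm_apply])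
  simpa [hev] using hmono (Fin.mk_le_of_le_val (Nat.one_le_iff_ne_zero.2 (Fin.val_ne_iff.2 hk')))

theorem last_le_of_antitone_perm (hN : 0 < N) (hev : ev = μ ∘ σ) (hmono : Antitone ev)
    (k : Fin N) : ev ⟨N - 1, by omega⟩ ≤ μ k := by
  simpa [hev] using hmono (Fin.le_def.2 (by simp; omega) : σ.symm k ≤ ⟨N - 1, by omega⟩)

end Ordering

/-- Expander mixing lemma: for all `A, B ⊆ [N]`,
`|e(A,B)/vol([N]) - (vol(A)/vol([N]))(vol(B)/vol([N]))|
  ≤ λ √((vol(A)/vol([N]))(vol(B)/vol([N])))`,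
where `λ = max (λ₂, -λ_N)` for the eigenvalues `λ₁ ≥ … ≥ λ_N` of the
normalized adjacency matrix `D^(-1/2) A D^(-1/2)`. -/
theorem stmt_9 (N : ℕ) (hN : 2 ≤ N) (a : Fin N → Fin N → ℝ)
    (hsymm : ∀ i j, a i j = a j i)
    (h01 : ∀ i j, a i j = 0 ∨ a i j = 1)
    (hdeg : ∀ i, 0 < deg N a i)
    (Bmat : Matrix (Fin N) (Fin N) ℝ)
    (hBmat : ∀ i j, Bmat i j = a i j / (Real.sqrt (deg N a i) * Real.sqrt (deg N a j)))
    (hHerm : Bmat.IsHermitian)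
    (ev : Fin N → ℝ) (σ : Equiv.Perm (Fin N))
    (hev : ev = hHerm.eigenvalues ∘ σ) (hmono : Antitone ev)
    (lam : ℝ) (hlam : lam = max (ev ⟨1, by omega⟩) (-(ev ⟨N - 1, by omega⟩))) :
    ∀ A B : Finset (Fin N),
      |eCount N a A B / vol N a Finset.univ -
          (vol N a A / vol N a Finset.univ) * (vol N a B / vol N a Finset.univ)| ≤
        lam * Real.sqrt ((vol N a A / vol N a Finset.univ) *
          (vol N a B / vol N a Finset.univ)) := by
  obtain rfl : Bmat = normAdj N a := Matrix.ext hBmat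
  have hb := hHerm.toEuclideanLin_eigenvectorBasis
  have hnonneg (i j : Fin N) : 0 ≤ a i j := (h01 i j).elim (·.ge) (· ▸ zero_le_one)
  have hgap (k : Fin N) (hk : k ≠ σ ⟨0, by omega⟩) : hHerm.eigenvalues k ≤ lam :=
    (le_of_antitone_perm_of_ne_first (by omega) hev hmono hk).trans (hlam ▸ le_max_left _ _)
  have hlow (k : Fin N) : -lam ≤ hHerm.eigenvalues k :=
    neg_le.1 ((neg_le_neg (last_le_of_antitone_perm (by omega) hev hmono k)).trans
      (hlam ▸ le_max_right _ _))
  have hlam0 : 0 ≤ lam := by linarith [hlow (σ ⟨1, by omega⟩), hgap (σ ⟨1, by omega⟩) (by simp)]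
  intro A B
  exact abs_div_sub_div_mul_div_le (sum_pos (fun i _ => hdeg i) ⟨⟨0, by omega⟩, mem_univ _⟩)
    (sum_nonneg fun i _ => (hdeg i).le) (sum_nonneg fun i _ => (hdeg i).le)
    (abs_eCount_sub_le hsymm hnonneg hdeg hb hlam0 hgap hlow A B)
end
end

section
/- For every initial condition u(0) in the simplex Δ^S, the mean-field ODE system du/dt = f(u(t)) = Q(u(t)) u(t) has a unique global solution u : [0,∞) → ℝ^S, and this solution satisfies u(t) ∈ Δ^S for all t ≥ 0. -/
open Finset

noncomputable section

/-- The probability simplex on a finite state space `S`. -/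
def simplex (S : Type*) [Fintype S] : Set (S → ℝ) :=
  {v | (∀ s, 0 ≤ v s ∧ v s ≤ 1) ∧ ∑ s, v s = 1}

/-
The simplex is invariant for the flow: the columns of `Q(φ)` sum to zero, so `∑ₛ uₛ` is
conserved, and the off-diagonal rates are nonnegative on nonnegative states, so `fₛ(u) ≥ 0`
whenever `uₛ = 0`. Since `f` is only locally Lipschitz, global existence is obtained for the
bounded, globally Lipschitz field `f ∘ π`, where `π` is the coordinatewise projection onto
`[0,1]^S`. As `πₛ(w) = 0` whenever `wₛ ≤ 0`, this field has `(f ∘ π)ₛ ≥ 0` on the whole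
half-space `wₛ ≤ 0`, which is what makes `uₛ ≥ 0` propagate; so its solution stays in the
simplex, where `π` is the identity, and it solves the original system. Uniqueness follows
from local Lipschitz continuity of `f`, which is `C¹`.
-/

open Set
open scoped NNReal

section ODE

variable {E : Type*} [NormedAddCommGroup E] [NormedSpace ℝ E] {g : E → E}

theorem LocallyLipschitz.eqOn_Icc_of_hasDerivWithinAt (hg : LocallyLipschitz g) {a b : ℝ}
    {x y : ℝ → E} (hx : ∀ t ∈ Set.Icc a b, HasDerivWithinAt x (g (x t)) (Set.Icc a b) t)
    (hy : ∀ t ∈ Set.Icc a b, HasDerivWithinAt y (g (y t)) (Set.Icc a b) t) (ha : x a = y a) :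
    EqOn x y (Set.Icc a b) := by
  have hxc : ContinuousOn x (Set.Icc a b) := fun t ht => (hx t ht).continuousWithinAt
  have hyc : ContinuousOn y (Set.Icc a b) := fun t ht => (hy t ht).continuousWithinAt
  set K := x '' Set.Icc a b ∪ y '' Set.Icc a b
  have hK : IsCompact K :=
    (isCompact_Icc.image_of_continuousOn hxc).union (isCompact_Icc.image_of_continuousOn hyc)
  obtain ⟨L, hL⟩ := hg.locallyLipschitzOn.exists_lipschitzOnWith_of_compact hK
  exact ODE_solution_unique_of_mem_Icc_right (v := fun _ => g) (s := fun _ => K)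
    (fun _ _ => hL) hxc
    (fun t ht => (hx t (Ico_subset_Icc_self ht)).mono_of_mem_nhdsWithin
      (Icc_mem_nhdsGE_of_mem ht))
    (fun _ ht => .inl (mem_image_of_mem x (Ico_subset_Icc_self ht))) hyc
    (fun t ht => (hy t (Ico_subset_Icc_self ht)).mono_of_mem_nhdsWithin
      (Icc_mem_nhdsGE_of_mem ht))
    (fun _ ht => .inr (mem_image_of_mem y (Ico_subset_Icc_self ht))) ha

theorem LocallyLipschitz.eqOn_Ici_of_hasDerivWithinAt (hg : LocallyLipschitz g) {a : ℝ}
    {x y : ℝ → E} (hx : ∀ t ∈ Set.Ici a, HasDerivWithinAt x (g (x t)) (Set.Ici a) t)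
    (hy : ∀ t ∈ Set.Ici a, HasDerivWithinAt y (g (y t)) (Set.Ici a) t) (ha : x a = y a) :
    EqOn x y (Set.Ici a) := fun _ ht =>
  hg.eqOn_Icc_of_hasDerivWithinAt (fun τ hτ => (hx τ hτ.1).mono Icc_subset_Ici_self)
    (fun τ hτ => (hy τ hτ.1).mono Icc_subset_Ici_self) ha ⟨ht, le_rfl⟩

theorem LipschitzWith.exists_forall_mem_Icc_hasDerivWithinAt [CompleteSpace E] {K : ℝ≥0}
    (hg : LipschitzWith K g) {L : ℝ} (hL : ∀ w, ‖g w‖ ≤ L) (x₀ : E) {T : ℝ} (hT : 0 ≤ T) :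
    ∃ x : ℝ → E, x 0 = x₀ ∧
      ∀ t ∈ Set.Icc 0 T, HasDerivWithinAt x (g (x t)) (Set.Icc 0 T) t := by
  lift T to ℝ≥0 using hT
  lift L to ℝ≥0 using (norm_nonneg _).trans (hL x₀)
  exact (IsPicardLindelof.of_time_independent (t₀ := ⟨0, le_rfl, T.2⟩) (a := L * T) (r := 0)
    (fun w _ => hL w) hg.lipschitzOnWith (by simp)).exists_eq_forall_mem_Icc_hasDerivWithinAt₀

theorem LipschitzWith.exists_forall_mem_Ici_hasDerivWithinAt [CompleteSpace E] {K : ℝ≥0}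
    (hg : LipschitzWith K g) {L : ℝ} (hL : ∀ w, ‖g w‖ ≤ L) (x₀ : E) :
    ∃ x : ℝ → E, x 0 = x₀ ∧
      ∀ t ∈ Set.Ici 0, HasDerivWithinAt x (g (x t)) (Set.Ici 0) t := by
  choose α hα₀ hα using fun n : ℕ => hg.exists_forall_mem_Icc_hasDerivWithinAt hL x₀ n.cast_nonneg
  have hcompat : ∀ m n : ℕ, ∀ t ∈ Set.Icc (0 : ℝ) m, t ∈ Set.Icc (0 : ℝ) n → α m t = α n t := by
    suffices ∀ m n : ℕ, m ≤ n → EqOn (α m) (α n) (Set.Icc 0 m) by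
      intro m n t hm hn
      rcases le_total m n with h | h
      exacts [this m n h hm, (this n m h hn).symm]
    intro m n hmn
    have hsub : Set.Icc (0 : ℝ) m ⊆ Set.Icc 0 n := Icc_subset_Icc_right (by exact_mod_cast hmn)
    exact hg.locallyLipschitz.eqOn_Icc_of_hasDerivWithinAt (hα m)
      (fun t ht => (hα n t (hsub ht)).mono hsub) ((hα₀ m).trans (hα₀ n).symm)
  have hceil : ∀ t : ℝ, 0 ≤ t → t ∈ Set.Icc (0 : ℝ) (⌈t⌉₊ + 1 : ℕ) := fun t ht =>
    ⟨ht, by push_cast; linarith [Nat.le_ceil t]⟩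
  refine ⟨fun t => α (⌈t⌉₊ + 1) t, by simpa using hα₀ 1, fun t ht => ?_⟩
  set N := ⌈t⌉₊ + 1
  have htN : t < N := by simp only [N]; push_cast; linarith [Nat.le_ceil t]
  have hd : HasDerivWithinAt (fun τ => α (⌈τ⌉₊ + 1) τ) (g (α N t)) (Set.Icc 0 N) t :=
    (hα N t ⟨ht, htN.le⟩).congr (fun τ hτ => hcompat _ N τ (hceil τ hτ.1) hτ) rfl
  exact hd.mono_of_mem_nhdsWithin
    (mem_nhdsWithin.2 ⟨Set.Iio (N : ℝ), isOpen_Iio, htN, fun τ hτ => ⟨hτ.2, hτ.1.le⟩⟩)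

end ODE

theorem nonneg_of_hasDerivWithinAt_Ici {y y' : ℝ → ℝ} {a : ℝ}
    (hy : ∀ t ∈ Set.Ici a, HasDerivWithinAt y (y' t) (Set.Ici a) t) (ha : 0 ≤ y a)
    (hy' : ∀ t ∈ Set.Ici a, y t ≤ 0 → 0 ≤ y' t) {t : ℝ} (ht : a ≤ t) : 0 ≤ y t := by
  by_contra! hneg
  have hc : 0 < t - a + 1 := by linarith
  set ε := -y t / (2 * (t - a + 1))
  have hε : 0 < ε := div_pos (by linarith) (by linarith)
  -- `-y` can only touch the fence `ε (τ - a + 1) > 0` where `y < 0`, hence where `-y' ≤ 0 < ε`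
  have hfence := image_le_of_deriv_right_lt_deriv_boundary' (a := a) (b := t)
    (f := fun τ => -y τ) (f' := fun τ => -y' τ) (B := fun τ => ε * (τ - a + 1)) (B' := fun _ => ε)
    (fun τ hτ => ((hy τ hτ.1).continuousWithinAt.mono Icc_subset_Ici_self).neg)
    (fun τ hτ => (hy τ hτ.1).neg.mono (Ici_subset_Ici.mpr hτ.1))
    (by linarith) (by fun_prop)
    (fun τ _ => by
      simpa using (((hasDerivAt_id τ).sub_const a).add_const 1).const_mul ε |>.hasDerivWithinAt)
    (fun τ hτ heq => by
      have : 0 < ε * (τ - a + 1) := mul_pos hε (by linarith [hτ.1])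
      linarith [hy' τ hτ.1 (by linarith)])
    ⟨ht, le_rfl⟩
  have : ε * (t - a + 1) = -y t / 2 := by simp only [ε]; field_simp
  linarith

section UnitCube

variable {S : Type*}

def unitCubeProj (w : S → ℝ) : S → ℝ := fun s => Set.projIcc 0 1 zero_le_one (w s)

theorem unitCubeProj_mem (w : S → ℝ) : unitCubeProj w ∈ Set.Icc 0 1 :=
  ⟨fun s => (Set.projIcc 0 1 zero_le_one (w s)).2.1,
    fun s => (Set.projIcc 0 1 zero_le_one (w s)).2.2⟩

theorem unitCubeProj_of_mem {w : S → ℝ} (hw : w ∈ Set.Icc 0 1) : unitCubeProj w = w :=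
  funext fun s => congrArg Subtype.val (Set.projIcc_of_mem _ ⟨hw.1 s, hw.2 s⟩)

theorem unitCubeProj_apply_of_nonpos {w : S → ℝ} {s : S} (hs : w s ≤ 0) : unitCubeProj w s = 0 :=
  congrArg Subtype.val (Set.projIcc_of_le_left _ hs)

theorem lipschitzWith_unitCubeProj [Fintype S] :
    LipschitzWith 1 (unitCubeProj : (S → ℝ) → S → ℝ) :=
  LipschitzWith.of_dist_le_mul fun w w' => by
    rw [NNReal.coe_one, one_mul, dist_pi_le_iff dist_nonneg]
    exact fun s => ((LipschitzWith.projIcc zero_le_one).dist_le_mul (w s) (w' s)).trans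
      (by simpa using dist_le_pi_dist w w' s)

end UnitCube

theorem LocallyLipschitz.exists_lipschitzWith_comp {α β γ : Type*} [PseudoMetricSpace α]
    [PseudoMetricSpace β] [PseudoMetricSpace γ] {f : β → γ} (hf : LocallyLipschitz f)
    {P : α → β} {K : ℝ≥0} (hP : LipschitzWith K P) {s : Set β} (hs : IsCompact s)
    (hPs : ∀ x, P x ∈ s) : ∃ K', LipschitzWith K' (f ∘ P) := by
  obtain ⟨K', hK'⟩ := hf.locallyLipschitzOn.exists_lipschitzOnWith_of_compact hs
  exact ⟨K' * K, lipschitzOnWith_univ.mp (hK'.comp hP.lipschitzOnWith fun x _ => hPs x)⟩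

theorem mem_simplex_of_hasDerivWithinAt {S : Type*} [Fintype S] {h : (S → ℝ) → S → ℝ}
    (hsum : ∀ w, ∑ s, h w s = 0) (hnonneg : ∀ w s, w s ≤ 0 → 0 ≤ h w s) {u : ℝ → S → ℝ}
    (hu : ∀ t ∈ Set.Ici 0, HasDerivWithinAt u (h (u t)) (Set.Ici 0) t) (hu₀ : u 0 ∈ simplex S)
    {t : ℝ} (ht : 0 ≤ t) : u t ∈ simplex S := by
  have hcoord : ∀ τ ∈ Set.Ici (0 : ℝ), ∀ s,
      HasDerivWithinAt (fun τ => u τ s) (h (u τ) s) (Set.Ici 0) τ :=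
    fun τ hτ => hasDerivWithinAt_pi.mp (hu τ hτ)
  have hpos : ∀ s, 0 ≤ u t s := fun s =>
    nonneg_of_hasDerivWithinAt_Ici (fun τ hτ => hcoord τ hτ s) (hu₀.1 s).1
      (fun τ _ => hnonneg (u τ) s) ht
  have hmass : ∀ τ ∈ Set.Ici (0 : ℝ),
      HasDerivWithinAt (fun τ => ∑ s, u τ s) 0 (Set.Ici 0) τ := fun τ hτ => by
    simpa [hsum] using HasDerivWithinAt.fun_sum (u := Finset.univ) fun s _ => hcoord τ hτ s
  have hsum_one : ∑ s, u t s = 1 :=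
    (constant_of_has_deriv_right_zero
      (fun τ hτ => (hmass τ hτ.1).continuousWithinAt.mono Icc_subset_Ici_self)
      (fun τ hτ => (hmass τ hτ.1).mono (Ici_subset_Ici.mpr hτ.1)) t ⟨ht, le_rfl⟩).trans hu₀.2
  exact ⟨fun s => ⟨hpos s, hsum_one ▸ single_le_sum (fun s _ => hpos s) (mem_univ s)⟩, hsum_one⟩

namespace MeanField

variable {S : Type*} [Fintype S] {q : S → S → (S → ℝ) → ℝ}
  {f : (S → ℝ) → (S → ℝ)}

theorem sum_rate_eq_zero [DecidableEq S]
    (hqdiag : ∀ s φ, q s s φ = -∑ s' ∈ Finset.univ.filter (· ≠ s), q s' s φ)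
    (φ : S → ℝ) (s' : S) : ∑ s, q s s' φ = 0 := by
  rw [← add_sum_erase _ _ (mem_univ s'), hqdiag s' φ, filter_ne', neg_add_cancel]

theorem sum_apply_eq_zero [DecidableEq S]
    (hqdiag : ∀ s φ, q s s φ = -∑ s' ∈ Finset.univ.filter (· ≠ s), q s' s φ)
    (hf : ∀ v s, f v s = ∑ s', q s s' v * v s') (v : S → ℝ) : ∑ s, f v s = 0 := by
  rw [sum_congr rfl fun s _ => hf v s, sum_comm]
  exact sum_eq_zero fun s' _ => by rw [← sum_mul, sum_rate_eq_zero hqdiag, zero_mul]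

theorem rate_nonneg {q0 : S → S → ℝ} {q1 : S → S → S → ℝ}
    (hq0 : ∀ s s', s ≠ s' → 0 ≤ q0 s s') (hq1 : ∀ s s' r, s ≠ s' → 0 ≤ q1 s s' r)
    (hqoff : ∀ s s', s ≠ s' → ∀ φ, q s s' φ = q0 s s' + ∑ r, q1 s s' r * φ r)
    {s s' : S} (hss' : s ≠ s') {φ : S → ℝ} (hφ : 0 ≤ φ) : 0 ≤ q s s' φ := by
  rw [hqoff s s' hss']
  exact add_nonneg (hq0 s s' hss') (sum_nonneg fun r _ => mul_nonneg (hq1 s s' r hss') (hφ r))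

theorem apply_nonneg_of_apply_eq_zero (hf : ∀ v s, f v s = ∑ s', q s s' v * v s')
    {v : S → ℝ} (hq : ∀ s s', s ≠ s' → 0 ≤ q s s' v) (hv : 0 ≤ v) {s : S} (hvs : v s = 0) :
    0 ≤ f v s := by
  rw [hf]
  refine sum_nonneg fun s' _ => ?_
  rcases eq_or_ne s s' with rfl | hss'
  · rw [hvs, mul_zero]
  · exact mul_nonneg (hq s s' hss') (hv s')

theorem contDiff_rate [DecidableEq S] {q0 : S → S → ℝ} {q1 : S → S → S → ℝ}
    (hqoff : ∀ s s', s ≠ s' → ∀ φ, q s s' φ = q0 s s' + ∑ r, q1 s s' r * φ r)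
    (hqdiag : ∀ s φ, q s s φ = -∑ s' ∈ Finset.univ.filter (· ≠ s), q s' s φ) (s s' : S) :
    ContDiff ℝ 1 (q s s') := by
  have hoff : ∀ s s', s ≠ s' → ContDiff ℝ 1 (q s s') := fun s s' hss' => by
    rw [funext (hqoff s s' hss')]
    fun_prop
  rcases eq_or_ne s s' with rfl | hss'
  · rw [funext (hqdiag s)]
    exact (ContDiff.sum fun s' hs' => hoff s' s (mem_filter.mp hs').2).neg
  · exact hoff s s' hss'

theorem contDiff [DecidableEq S] {q0 : S → S → ℝ} {q1 : S → S → S → ℝ}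
    (hqoff : ∀ s s', s ≠ s' → ∀ φ, q s s' φ = q0 s s' + ∑ r, q1 s s' r * φ r)
    (hqdiag : ∀ s φ, q s s φ = -∑ s' ∈ Finset.univ.filter (· ≠ s), q s' s φ)
    (hf : ∀ v s, f v s = ∑ s', q s s' v * v s') : ContDiff ℝ 1 f := by
  rw [funext fun v => funext (hf v), contDiff_pi]
  exact fun s => ContDiff.sum fun s' _ =>
    (contDiff_rate hqoff hqdiag s s').mul (contDiff_apply ℝ ℝ s')

end MeanField

theorem stmt_11_general {S : Type*} [Fintype S] [DecidableEq S]
    (q0 : S → S → ℝ) (q1 : S → S → S → ℝ)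
    (hq0 : ∀ s s', s ≠ s' → 0 ≤ q0 s s')
    (hq1 : ∀ s s' r, s ≠ s' → 0 ≤ q1 s s' r)
    (q : S → S → (S → ℝ) → ℝ)
    (hqoff : ∀ s s', s ≠ s' → ∀ φ, q s s' φ = q0 s s' + ∑ r, q1 s s' r * φ r)
    (hqdiag : ∀ s φ, q s s φ = -∑ s' ∈ Finset.univ.filter (· ≠ s), q s' s φ)
    (f : (S → ℝ) → (S → ℝ)) (hf : ∀ v s, f v s = ∑ s', q s s' v * v s')
    (u0 : S → ℝ) (hu0 : u0 ∈ simplex S) :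
    (∃ u : ℝ → S → ℝ, u 0 = u0 ∧
        (∀ t ∈ Set.Ici (0 : ℝ), HasDerivWithinAt u (f (u t)) (Set.Ici 0) t) ∧
        (∀ t ∈ Set.Ici (0 : ℝ), u t ∈ simplex S)) ∧
      (∀ u v : ℝ → S → ℝ, u 0 = u0 → v 0 = u0 →
        (∀ t ∈ Set.Ici (0 : ℝ), HasDerivWithinAt u (f (u t)) (Set.Ici 0) t) →
        (∀ t ∈ Set.Ici (0 : ℝ), HasDerivWithinAt v (f (v t)) (Set.Ici 0) t) →
        ∀ t ∈ Set.Ici (0 : ℝ), u t = v t) := by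
  have hfL : LocallyLipschitz f := (MeanField.contDiff hqoff hqdiag hf).locallyLipschitz
  obtain ⟨K, hK⟩ :=
    hfL.exists_lipschitzWith_comp lipschitzWith_unitCubeProj isCompact_Icc unitCubeProj_mem
  obtain ⟨L, hL⟩ := isCompact_Icc.exists_bound_of_continuousOn (f := f) hfL.continuous.continuousOn
  obtain ⟨u, hu₀, hu⟩ :=
    hK.exists_forall_mem_Ici_hasDerivWithinAt (fun w => hL _ (unitCubeProj_mem w)) u0
  have hsimplex : ∀ t ∈ Set.Ici (0 : ℝ), u t ∈ simplex S := fun t ht =>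
    mem_simplex_of_hasDerivWithinAt (fun w => MeanField.sum_apply_eq_zero hqdiag hf _)
      (fun w s hws => MeanField.apply_nonneg_of_apply_eq_zero hf
        (fun s s' hss' => MeanField.rate_nonneg hq0 hq1 hqoff hss' (unitCubeProj_mem w).1)
        (unitCubeProj_mem w).1 (unitCubeProj_apply_of_nonpos hws))
      hu (hu₀ ▸ hu0) ht
  refine ⟨⟨u, hu₀, fun t ht => ?_, hsimplex⟩, fun x y hx₀ hy₀ hx hy t ht =>
    hfL.eqOn_Ici_of_hasDerivWithinAt hx hy (hx₀.trans hy₀.symm) ht⟩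
  have hcube : u t ∈ Set.Icc 0 1 :=
    ⟨fun s => ((hsimplex t ht).1 s).1, fun s => ((hsimplex t ht).1 s).2⟩
  simpa [unitCubeProj_of_mem hcube] using hu t ht

/-- For every initial condition `u 0 ∈ Δ^S`, the mean-field ODE
`du/dt = f(u(t)) = Q(u(t)) u(t)` has a unique global solution on `[0,∞)`, and
this solution stays in the simplex `Δ^S`. -/
theorem stmt_11 {S : Type*} [Fintype S] [DecidableEq S] [Nonempty S]
    (q0 : S → S → ℝ) (q1 : S → S → S → ℝ)
    (hq0 : ∀ s s', s ≠ s' → 0 ≤ q0 s s')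
    (hq1 : ∀ s s' r, s ≠ s' → 0 ≤ q1 s s' r)
    (q : S → S → (S → ℝ) → ℝ)
    (hqoff : ∀ s s', s ≠ s' → ∀ φ, q s s' φ = q0 s s' + ∑ r, q1 s s' r * φ r)
    (hqdiag : ∀ s φ, q s s φ = -∑ s' ∈ Finset.univ.filter (· ≠ s), q s' s φ)
    (f : (S → ℝ) → (S → ℝ)) (hf : ∀ v s, f v s = ∑ s', q s s' v * v s')
    (u0 : S → ℝ) (hu0 : u0 ∈ simplex S) :
    (∃ u : ℝ → S → ℝ, u 0 = u0 ∧
        (∀ t ∈ Set.Ici (0 : ℝ), HasDerivWithinAt u (f (u t)) (Set.Ici 0) t) ∧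
        (∀ t ∈ Set.Ici (0 : ℝ), u t ∈ simplex S)) ∧
      (∀ u v : ℝ → S → ℝ, u 0 = u0 → v 0 = u0 →
        (∀ t ∈ Set.Ici (0 : ℝ), HasDerivWithinAt u (f (u t)) (Set.Ici 0) t) →
        (∀ t ∈ Set.Ici (0 : ℝ), HasDerivWithinAt v (f (v t)) (Set.Ici 0) t) →
        ∀ t ∈ Set.Ici (0 : ℝ), u t = v t) :=
  stmt_11_general q0 q1 hq0 hq1 q hqoff hqdiag f hf u0 hu0
end
end
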